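/- Let M be a compact metric space, Π_D a finite-dimensional space of continuous functions on M containing the constant functions, and suppose the dual certificate condition of Theorem 1 holds for a support set T. Then the minimizer of the TV minimization problem is supported on T. -/

import Mathlib

open MeasureTheory

/-- Integral of a real function against a signed measure, via the Jordan decomposition. -/
noncomputable def sintegral {M : Type*} [MeasurableSpace M]
    (μ : SignedMeasure M) (f : M → ℝ) : ℝ :=
  (∫ x, f x ∂μ.toJordanDecomposition.posPart) - (∫ x, f x ∂μ.toJordanDecomposition.negPart)

/-!
Let `u` be the sign pattern of the weights `c` and `q` its certificate. Pairing with `q` gives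
`⟨x, q⟩ = ∑ |c m|`, and `‖x‖_TV ≤ ∑ |c m|` because the Jordan parts of `x` are dominated by the
positive and negative Dirac parts of `x`. Moreover `⟨x', q⟩ = ⟨x, q⟩` because `q ∈ Π_D` and `x'`
has the same measurements. For a minimizer, `‖x'‖_TV ≤ ‖x‖_TV`, so
`∫ |q| d|x'| ≥ ⟨x', q⟩ ≥ |x'|(M)`; as `|q| ≤ 1` this forces `|q| = 1` almost everywhere for `|x'|`,
while `|q| < 1` off `T`.
-/

open scoped NNReal ENNReal

namespace MeasureTheory

variable {α : Type*} [MeasurableSpace α]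

theorem Measure.le_of_add_eq_add_of_mutuallySingular {μ ν p n : Measure α} (hμν : μ ⟂ₘ ν)
    (h : μ + n = ν + p) : μ ≤ p := by
  obtain ⟨S, -, hμS, hνS⟩ := hμν
  refine Measure.le_iff.2 fun E _ => ?_
  calc μ E ≤ μ (E ∩ S) + μ (E \ S) := measure_le_inter_add_sdiff μ E S
    _ = μ (E \ S) := by rw [measure_mono_null Set.inter_subset_right hμS, zero_add]
    _ ≤ (μ + n) (E \ S) := by rw [Measure.add_apply]; exact le_self_add
    _ = p (E \ S) := by
      rw [h, Measure.add_apply, measure_mono_null (fun _ hx => hx.2) hνS, zero_add]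
    _ ≤ p E := measure_mono Set.sdiff_subset

namespace SignedMeasure

variable {μ : SignedMeasure α} {p n : Measure α} [IsFiniteMeasure p] [IsFiniteMeasure n]

theorem posPart_add_eq_negPart_add (h : μ = p.toSignedMeasure - n.toSignedMeasure) :
    μ.toJordanDecomposition.posPart + n = μ.toJordanDecomposition.negPart + p := by
  rw [← Measure.toSignedMeasure_eq_toSignedMeasure_iff, Measure.toSignedMeasure_add,
    Measure.toSignedMeasure_add]
  have hj := μ.toSignedMeasure_toJordanDecomposition.trans h
  exact (sub_eq_sub_iff_add_eq_add.1 hj).trans (add_comm _ _)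

theorem totalVariation_le_add (h : μ = p.toSignedMeasure - n.toSignedMeasure) :
    μ.totalVariation ≤ p + n := by
  have hpn := posPart_add_eq_negPart_add h
  have hsing := μ.toJordanDecomposition.mutuallySingular
  exact add_le_add (Measure.le_of_add_eq_add_of_mutuallySingular hsing hpn)
    (Measure.le_of_add_eq_add_of_mutuallySingular hsing.symm hpn.symm)

end SignedMeasure

namespace Measure

variable {ι : Type*} [Fintype ι]

noncomputable def diracSum (w : ι → ℝ≥0) (t : ι → α) : Measure α :=
  ∑ i, w i • dirac (t i)

instance (w : ι → ℝ≥0) (t : ι → α) : IsFiniteMeasure (diracSum w t) := by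
  unfold diracSum; infer_instance

theorem diracSum_toSignedMeasure (w : ι → ℝ≥0) (t : ι → α) :
    (diracSum w t).toSignedMeasure = ∑ i, (w i : ℝ) • (dirac (t i)).toSignedMeasure := by
  ext E hE
  rw [toSignedMeasure_apply_measurable hE, FunLike.coe_sum, Finset.sum_apply, measureReal_def,
    diracSum, finsetSum_apply, ENNReal.toReal_sum fun i _ => by finiteness]
  refine Finset.sum_congr rfl fun i _ => ?_
  simp [toSignedMeasure_apply_measurable hE, measureReal_def]

theorem sum_smul_dirac_toSignedMeasure_eq_sub (c : ι → ℝ) (t : ι → α) :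
    ∑ i, c i • (dirac (t i)).toSignedMeasure =
      (diracSum (fun i => (c i).toNNReal) t).toSignedMeasure -
        (diracSum (fun i => (-c i).toNNReal) t).toSignedMeasure := by
  rw [diracSum_toSignedMeasure, diracSum_toSignedMeasure, ← Finset.sum_sub_distrib]
  refine Finset.sum_congr rfl fun i _ => ?_
  simpa only [Real.coe_toNNReal', max_zero_sub_max_neg_zero_eq_self] using
    sub_smul ((c i).toNNReal : ℝ) ((-c i).toNNReal) (dirac (t i)).toSignedMeasure

theorem diracSum_apply_univ (w : ι → ℝ≥0) (t : ι → α) :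
    diracSum w t Set.univ = ∑ i, (w i : ℝ≥0∞) := by
  simp [diracSum]

end Measure

theorem SignedMeasure.totalVariation_sum_smul_dirac_le {ι : Type*} [Fintype ι] (c : ι → ℝ)
    (t : ι → α) :
    (∑ i, c i • (Measure.dirac (t i)).toSignedMeasure).totalVariation Set.univ ≤
      ENNReal.ofReal (∑ i, |c i|) := by
  refine (SignedMeasure.totalVariation_le_add
    (Measure.sum_smul_dirac_toSignedMeasure_eq_sub c t) Set.univ).trans_eq ?_
  rw [Measure.add_apply, Measure.diracSum_apply_univ, Measure.diracSum_apply_univ,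
    ← Finset.sum_add_distrib, ENNReal.ofReal_sum_of_nonneg fun i _ => abs_nonneg (c i)]
  refine Finset.sum_congr rfl fun i _ => ?_
  rw [← ENNReal.coe_add, ← ENNReal.ofReal_coe_nnreal, NNReal.coe_add, Real.coe_toNNReal',
    Real.coe_toNNReal', max_zero_add_max_neg_zero_eq_abs_self]

end MeasureTheory

section CompactSpace

variable {α : Type*} [MeasurableSpace α] [TopologicalSpace α] [CompactSpace α]
  [OpensMeasurableSpace α]

theorem Continuous.integrable_of_compactSpace {f : α → ℝ} (hf : Continuous f) (μ : Measure α)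
    [IsFiniteMeasure μ] : Integrable f μ :=
  hf.integrable_of_hasCompactSupport (.of_compactSpace f)

theorem MeasureTheory.Measure.integral_diracSum {ι : Type*} [Fintype ι] (w : ι → ℝ≥0)
    (t : ι → α) {f : α → ℝ} (hf : Continuous f) :
    ∫ x, f x ∂diracSum w t = ∑ i, w i * f (t i) := by
  rw [diracSum, integral_finsetSum_measure fun i _ => hf.integrable_of_compactSpace _]
  simp [integral_smul_nnreal_measure, integral_dirac' f _ hf.stronglyMeasurable, NNReal.smul_def]

theorem sintegral_eq_integral_sub_integral {μ : SignedMeasure α} {p n : Measure α}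
    [IsFiniteMeasure p] [IsFiniteMeasure n] (h : μ = p.toSignedMeasure - n.toSignedMeasure)
    {f : α → ℝ} (hf : Continuous f) : sintegral μ f = ∫ x, f x ∂p - ∫ x, f x ∂n := by
  have hpn := congrArg (fun ν => ∫ x, f x ∂ν) (SignedMeasure.posPart_add_eq_negPart_add h)
  simp only [integral_add_measure (hf.integrable_of_compactSpace _)
    (hf.integrable_of_compactSpace _)] at hpn
  rw [sintegral]
  linarith

theorem sintegral_sum_smul (μ : SignedMeasure α) {ι : Type*} [Fintype ι] (a : ι → ℝ)
    (P : ι → C(α, ℝ)) : sintegral μ ⇑(∑ k, a k • P k) = ∑ k, a k * sintegral μ (P k) := by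
  have hint (ν : Measure α) [IsFiniteMeasure ν] (k : ι) : Integrable (fun x => a k * P k x) ν :=
    ((P k).continuous.integrable_of_compactSpace ν).const_mul (a k)
  simp only [sintegral, ContinuousMap.coe_sum, ContinuousMap.coe_smul, Finset.sum_apply,
    Pi.smul_apply, smul_eq_mul, integral_finsetSum _ fun k _ => hint _ k, integral_const_mul,
    ← Finset.sum_sub_distrib, mul_sub]

theorem sintegral_le_integral_abs (μ : SignedMeasure α) {f : α → ℝ} (hf : Continuous f) :
    sintegral μ f ≤ ∫ x, |f x| ∂μ.totalVariation := by
  have hf' := hf.integrable_of_compactSpace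
  have habs := hf.abs.integrable_of_compactSpace
  have hpos : ∫ x, f x ∂μ.toJordanDecomposition.posPart ≤
      ∫ x, |f x| ∂μ.toJordanDecomposition.posPart :=
    integral_mono (hf' _) (habs _) fun x => le_abs_self (f x)
  have hneg : -∫ x, f x ∂μ.toJordanDecomposition.negPart ≤
      ∫ x, |f x| ∂μ.toJordanDecomposition.negPart := by
    rw [← integral_neg]
    exact integral_mono (hf' _).neg (habs _) fun x => neg_le_abs (f x)
  rw [sintegral, SignedMeasure.totalVariation, integral_add_measure (habs _) (habs _)]
  linarith

theorem ae_abs_eq_one_of_totalVariation_le_sintegral (μ : SignedMeasure α) {f : α → ℝ}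
    (hf : Continuous f) (hle : ∀ x, |f x| ≤ 1)
    (h : μ.totalVariation.real Set.univ ≤ sintegral μ f) :
    ∀ᵐ x ∂μ.totalVariation, |f x| = 1 := by
  have habs := hf.abs.integrable_of_compactSpace μ.totalVariation
  have hint : ∫ x, |f x| ∂μ.totalVariation = ∫ _, (1 : ℝ) ∂μ.totalVariation := by
    refine le_antisymm (integral_mono habs (integrable_const 1) hle) ?_
    rw [integral_const, smul_eq_mul, mul_one]
    exact h.trans (sintegral_le_integral_abs μ hf)
  exact (integral_eq_iff_of_ae_le habs (integrable_const 1) (ae_of_all _ hle)).1 hint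

variable {ι : Type*} [Fintype ι]

theorem sintegral_sum_smul_dirac (c : ι → ℝ) (t : ι → α) {f : α → ℝ} (hf : Continuous f) :
    sintegral (∑ i, c i • (Measure.dirac (t i)).toSignedMeasure) f = ∑ i, c i * f (t i) := by
  rw [sintegral_eq_integral_sub_integral (Measure.sum_smul_dirac_toSignedMeasure_eq_sub c t) hf,
    Measure.integral_diracSum _ _ hf, Measure.integral_diracSum _ _ hf, ← Finset.sum_sub_distrib]
  refine Finset.sum_congr rfl fun i _ => ?_
  rw [← sub_mul, Real.coe_toNNReal', Real.coe_toNNReal', max_zero_sub_max_neg_zero_eq_self]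

end CompactSpace

theorem tv_minimizer_supported_on_T_general
    {M : Type*} [MetricSpace M] [CompactSpace M] [MeasurableSpace M] [BorelSpace M]
    {D s : ℕ} (P : Fin D → C(M, ℝ))
    (t : Fin s → M) (c : Fin s → ℝ)
    (x : SignedMeasure M)
    (hx : x = ∑ m : Fin s, c m • (Measure.dirac (t m)).toSignedMeasure)
    (hcert : ∀ u : Fin s → ℝ, (∀ m, u m = 1 ∨ u m = -1) →
      ∃ a : Fin D → ℝ,
        (∀ m, (∑ k : Fin D, a k * P k (t m)) = u m) ∧
        (∀ τ : M, τ ∉ Set.range t → |∑ k : Fin D, a k * P k τ| < 1)) :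
    ∀ x' : SignedMeasure M,
      (∀ k : Fin D, sintegral x' (P k) = sintegral x (P k)) →
      (∀ z : SignedMeasure M,
        (∀ k : Fin D, sintegral z (P k) = sintegral x (P k)) →
        x'.totalVariation Set.univ ≤ z.totalVariation Set.univ) →
      x'.totalVariation ((Set.range t)ᶜ) = 0 := by
  intro x' hmatch hmin
  obtain ⟨a, hq_T, hq_off⟩ := hcert (fun m => if 0 ≤ c m then 1 else -1)
    fun m => by split_ifs <;> simp
  set q : C(M, ℝ) := ∑ k, a k • P k
  have hq (τ : M) : q τ = ∑ k, a k * P k τ := by simp [q]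
  have hx_q : sintegral x q = ∑ m, |c m| := by
    rw [hx, sintegral_sum_smul_dirac c t q.continuous]
    refine Finset.sum_congr rfl fun m _ => ?_
    rw [hq, hq_T]
    split_ifs with hc
    · rw [mul_one, abs_of_nonneg hc]
    · rw [mul_neg_one, abs_of_neg (not_le.1 hc)]
  have hx'_q : sintegral x' q = sintegral x q := by
    simp only [q, sintegral_sum_smul, hmatch]
  have htv : x'.totalVariation.real Set.univ ≤ ∑ m, |c m| :=
    ENNReal.toReal_le_of_le_ofReal (Finset.sum_nonneg fun m _ => abs_nonneg (c m))
      ((hmin x fun _ => rfl).trans (hx ▸ SignedMeasure.totalVariation_sum_smul_dirac_le c t))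
  have hq_le (τ : M) : |q τ| ≤ 1 := by
    by_cases hτ : τ ∈ Set.range t
    · obtain ⟨m, rfl⟩ := hτ
      rw [hq, hq_T]
      split_ifs <;> simp
    · exact (hq τ ▸ hq_off τ hτ).le
  have hae := ae_abs_eq_one_of_totalVariation_le_sintegral x' q.continuous hq_le
    (by rw [hx'_q, hx_q]; exact htv)
  exact measure_mono_null (fun τ hτ => (hq τ ▸ hq_off τ hτ).ne) (ae_iff.1 hae)

/-- under the dual certificate condition of Theorem 1 (and with `Π_D`
containing the constants), every TV-minimizer among measures matching the measurements is
supported on `T = {t_m}`. -/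
theorem tv_minimizer_supported_on_T
    {M : Type*} [MetricSpace M] [CompactSpace M] [MeasurableSpace M] [BorelSpace M]
    {D s : ℕ} (P : Fin D → C(M, ℝ))
    (hconst : ∃ a : Fin D → ℝ, ∀ τ : M, (∑ k : Fin D, a k * P k τ) = 1)
    (t : Fin s → M) (c : Fin s → ℝ)
    (ht : Function.Injective t) (hc : ∀ m, c m ≠ 0)
    (x : SignedMeasure M)
    (hx : x = ∑ m : Fin s, c m • (Measure.dirac (t m)).toSignedMeasure)
    (hcert : ∀ u : Fin s → ℝ, (∀ m, u m = 1 ∨ u m = -1) →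
      ∃ a : Fin D → ℝ,
        (∀ m, (∑ k : Fin D, a k * P k (t m)) = u m) ∧
        (∀ τ : M, τ ∉ Set.range t → |∑ k : Fin D, a k * P k τ| < 1)) :
    ∀ x' : SignedMeasure M,
      (∀ k : Fin D, sintegral x' (P k) = sintegral x (P k)) →
      (∀ z : SignedMeasure M,
        (∀ k : Fin D, sintegral z (P k) = sintegral x (P k)) →
        x'.totalVariation Set.univ ≤ z.totalVariation Set.univ) →
      x'.totalVariation ((Set.range t)ᶜ) = 0 :=
  tv_minimizer_supported_on_T_general P t c x hx hcert
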